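/- arXiv:2207.08556 — 3 statements merged into one kernel-verified Lean document; each statement's English description precedes it below -/
import Mathlib

section
/- Let A = [[1,1],[0,1]] be the 2×2 real constant-velocity transition matrix and K = (k₁, k₂) ∈ ℝ² a fixed Kalman gain vector. Fix reals p, v (initial position and velocity) and λ (the attacker's shift). Suppose the tracker holds the exact state s₀ = (p, v), the true object moves with constant velocity so its true state at step n is ŝ(n) = (p + n·v, v), and at the attack frame the observation is the shifted position z = p + v + λ. Define the MOT hijacking trajectory by the KF update s₁ = A·s₀ + (z − (A·s₀)₁)·K, followed by m prediction-only (hiding) frames s_{n+1} = A·s_n for n ≥ 1. Then the perceived position deviation after the attack satisfies (s_{1+m})₁ − ŝ(1+m)₁ = (k₁ + m·k₂)·λ, i.e., a single shifting frame followed by m hiding frames produces a position deviation growing linearly in m with slope k₂·λ. -/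
/-- Discrete-time deterministic core of Proposition 1 (Attack Effectiveness):
a single shifting frame (shift `lam`) followed by `m` hiding (prediction-only)
frames produces a perceived position deviation `(k₁ + m·k₂)·lam`, growing
linearly in `m` with slope `k₂·lam`. -/
theorem MOT_hijack_deviation_grows_linearly
    (p v lam k₁ k₂ : ℝ)
    (A : Matrix (Fin 2) (Fin 2) ℝ) (hA : A = !![1, 1; 0, 1])
    (K : Fin 2 → ℝ) (hK : K = ![k₁, k₂])
    (z : ℝ) (hz : z = p + v + lam)
    (sTrue : ℕ → Fin 2 → ℝ) (hsTrue : ∀ n, sTrue n = ![p + (n : ℝ) * v, v])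
    (s : ℕ → Fin 2 → ℝ)
    (h0 : s 0 = ![p, v])
    (h1 : s 1 = A.mulVec (s 0) + (z - A.mulVec (s 0) 0) • K)
    (hhide : ∀ n, 1 ≤ n → s (n + 1) = A.mulVec (s n))
    (m : ℕ) :
    s (1 + m) 0 - sTrue (1 + m) 0 = (k₁ + (m : ℝ) * k₂) * lam := by
  subst hA hK hz
  have key : ∀ m : ℕ, s (1 + m) 0 = p + (1 + (m:ℝ)) * v + (k₁ + (m:ℝ) * k₂) * lam
      ∧ s (1 + m) 1 = v + k₂ * lam := by
    intro m
    induction m with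
    | zero =>
      simp only [Nat.add_zero, h1, h0]
      constructor <;>
        simp [Matrix.mulVec, dotProduct, Fin.sum_univ_two] <;> ring
    | succ n ih =>
      have h := hhide (1 + n) (by omega)
      rw [show 1 + (n + 1) = (1 + n) + 1 from by omega, h]
      constructor <;>
        simp [Matrix.mulVec, dotProduct, Fin.sum_univ_two, ih.1, ih.2,
          Nat.cast_add, Nat.cast_one] <;> ring
  rw [(key m).1, hsTrue]
  push_cast
  simp
end

section
/- Let δ > 0, λ > 0 with the same setup as the single-shift-then-hide attack: A = [[1,1],[0,1]], gain K = (k₁, k₂) ∈ ℝ², exact initial tracked state s₀ = (p, v), true state ŝ(n) = (p + n·v, v), shifted observation z = p + v + λ at the attack frame, and φ_δ(x) = max(−δ, min(δ, x)) the clipping function. Define the defended trajectory by s₁ = A·s₀ + φ_δ(z − (A·s₀)₁)·K followed by m prediction-only frames s_{n+1} = A·s_n. Then the perceived position deviation equals (s_{1+m})₁ − ŝ(1+m)₁ = (k₁ + m·k₂)·min(λ, δ); in particular, when λ > δ the deviation under the defense is exactly the factor δ/λ smaller than the deviation (k₁ + m·k₂)·λ of the undefended Kalman filter. -/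
/-!
Since the tracked state starts on the true track, the innovation at the attack frame is exactly
`lam`, which the clip turns into `min lam δ` (as `-δ < 0 < lam`). The matched frame therefore
offsets the tracked state from the true one by `min lam δ • K`, and each prediction-only frame
adds the velocity offset `min lam δ * k₂` to the position offset.
-/

open Matrix

theorem max_neg_min_eq_min {α : Type*} [AddCommGroup α] [LinearOrder α] [IsOrderedAddMonoid α]
    {δ x : α} (hδ : 0 ≤ δ) (hx : -δ ≤ x) : max (-δ) (min δ x) = min x δ := by
  rw [max_eq_right (le_min (neg_le_self hδ) hx), min_comm]

theorem constVelocity_mulVec {R : Type*} [CommSemiring R] (a b : R) :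
    !![1, 1; 0, 1] *ᵥ ![a, b] = ![a + b, b] := by
  ext i
  fin_cases i <;> simp [mulVec, dotProduct, Fin.sum_univ_two]

theorem constVelocity_trajectory_eq {R : Type*} [CommSemiring R] {s : ℕ → Fin 2 → R}
    (hs : ∀ n, s (n + 1) = !![1, 1; 0, 1] *ᵥ s n) (m : ℕ) :
    s m = ![s 0 0 + (m : R) * s 0 1, s 0 1] := by
  induction m with
  | zero => ext i; fin_cases i <;> simp
  | succ m ih =>
    rw [hs, ih, constVelocity_mulVec]
    exact vec2_eq (by push_cast; ring) rfl

/-- Discrete-time deterministic core of Proposition 3 (Defense Effectiveness):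
with the clipped-innovation security patch, a single shifting frame (shift `lam`)
followed by `m` hiding frames produces a position deviation `(k₁ + m·k₂)·min(lam, δ)`;
in particular, when `lam > δ` the defended deviation is exactly the factor `δ/lam`
smaller than the undefended deviation `(k₁ + m·k₂)·lam`. -/
theorem defended_MOT_hijack_deviation
    (δ lam : ℝ) (hδ : 0 < δ) (hlam : 0 < lam)
    (p v k₁ k₂ : ℝ)
    (φ : ℝ → ℝ) (hφ : ∀ x, φ x = max (-δ) (min δ x))
    (A : Matrix (Fin 2) (Fin 2) ℝ) (hA : A = !![1, 1; 0, 1])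
    (K : Fin 2 → ℝ) (hK : K = ![k₁, k₂])
    (z : ℝ) (hz : z = p + v + lam)
    (sTrue : ℕ → Fin 2 → ℝ) (hsTrue : ∀ n, sTrue n = ![p + (n : ℝ) * v, v])
    (s : ℕ → Fin 2 → ℝ)
    (h0 : s 0 = ![p, v])
    (h1 : s 1 = A.mulVec (s 0) + φ (z - A.mulVec (s 0) 0) • K)
    (hhide : ∀ n, 1 ≤ n → s (n + 1) = A.mulVec (s n))
    (m : ℕ) :
    s (1 + m) 0 - sTrue (1 + m) 0 = (k₁ + (m : ℝ) * k₂) * min lam δ ∧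
      (δ < lam →
        s (1 + m) 0 - sTrue (1 + m) 0 = (δ / lam) * ((k₁ + (m : ℝ) * k₂) * lam)) := by
  subst hA hK hz
  have hclip : φ (p + v + lam - (!![1, 1; 0, 1] *ᵥ s 0) 0) = min lam δ := by
    rw [h0, constVelocity_mulVec, cons_val_zero, add_sub_cancel_left, hφ]
    exact max_neg_min_eq_min hδ.le (by linarith)
  have hmatched : s 1 = ![p + v + min lam δ * k₁, v + min lam δ * k₂] := by
    rw [h1, hclip, h0, constVelocity_mulVec, smul_vec2, vec2_add, smul_eq_mul, smul_eq_mul]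
  have hhidden : s (1 + m) = ![s 1 0 + m * s 1 1, s 1 1] :=
    constVelocity_trajectory_eq (s := fun n => s (1 + n))
      (fun n => hhide (1 + n) (Nat.le_add_right 1 n)) m
  have hdev : s (1 + m) 0 - sTrue (1 + m) 0 = (k₁ + (m : ℝ) * k₂) * min lam δ := by
    rw [hhidden, hsTrue, hmatched]
    simp only [cons_val_zero, cons_val_one, Nat.cast_add, Nat.cast_one]
    ring
  refine ⟨hdev, fun hlt => ?_⟩
  rw [hdev, min_eq_right hlt.le]
  field_simp
end

section
/- Let β > 0, c ∈ ℝ, and 0 ≤ a ≤ b ≤ T. Let Δ : ℝ → ℝ be continuous on [0, T] with Δ(0) = 0, differentiable with Δ'(t) = −β·Δ(t) for t in (0,a) ∪ (b,T), and differentiable with Δ'(t) = −β·Δ(t) + c for t in (a,b). Then Δ(T) = (c/β)·(e^{−β(T−b)} − e^{−β(T−a)}). -/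
/-!
Multiplying by the integrating factor `e^{βt}` shows that on any interval where
`Δ' = -βΔ + c`, the quantity `(Δ - c/β)` decays exactly like `e^{-βt}`. Applying this on
`[0, a]` and `[b, T]` with `c = 0` and on `[a, b]` with the forcing `c`, and starting from
`Δ(0) = 0`, gives `Δ(a) = 0`, `Δ(b) = (c/β)(1 - e^{-β(b-a)})` and then `Δ(T) = e^{-β(T-b)} Δ(b)`.
-/

open Real Set

theorem sub_div_eq_exp_mul_of_hasDerivAt_affine {β c u v : ℝ} (hβ : β ≠ 0) (huv : u ≤ v)
    {f : ℝ → ℝ} (hf : ContinuousOn f (Icc u v))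
    (hf' : ∀ t ∈ Ioo u v, HasDerivAt f (-β * f t + c) t) :
    f v - c / β = exp (-β * (v - u)) * (f u - c / β) := by
  set g : ℝ → ℝ := fun t => (f t - c / β) * exp (β * t)
  have hexp : ∀ t, HasDerivAt (fun t => exp (β * t)) (exp (β * t) * β) t := fun t => by
    simpa using ((hasDerivAt_id t).const_mul β).exp
  have hg' : ∀ t ∈ Ioo u v, HasDerivAt g 0 t := fun t ht =>
    (((hf' t ht).sub_const (c / β)).mul (hexp t)).congr_deriv (by field_simp; ring)
  have hg : g v = g u := by
    have hcont : ContinuousOn g (Icc u v) :=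
      (hf.sub continuousOn_const).mul (continuous_const.mul continuous_id).rexp.continuousOn
    have := intervalIntegral.integral_eq_sub_of_hasDeriv_right_of_le huv hcont
      (fun t ht => (hg' t ht).hasDerivWithinAt) intervalIntegrable_const
    simp only [intervalIntegral.integral_zero] at this
    linarith
  have hdecay : exp (-β * (v - u)) = exp (β * u) / exp (β * v) := by
    rw [← exp_sub]; ring_nf
  rw [hdecay, div_mul_eq_mul_div, eq_div_iff (exp_pos _).ne']
  simpa [g, mul_comm] using hg

/-- Exact shifting-phase deviation computation in the proof of Proposition 1:
if `Δ(0) = 0`, `Δ' = -βΔ` outside `(a, b)` and `Δ' = -βΔ + c` on `(a, b)`,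
then `Δ(T) = (c/β)·(e^{−β(T−b)} − e^{−β(T−a)})`. -/
theorem shifting_phase_deviation
    (β c a b T : ℝ) (hβ : 0 < β) (ha : 0 ≤ a) (hab : a ≤ b) (hbT : b ≤ T)
    (Δ : ℝ → ℝ) (hcont : ContinuousOn Δ (Set.Icc 0 T)) (h0 : Δ 0 = 0)
    (hout : ∀ t ∈ Set.Ioo 0 a ∪ Set.Ioo b T, HasDerivAt Δ (-β * Δ t) t)
    (hin : ∀ t ∈ Set.Ioo a b, HasDerivAt Δ (-β * Δ t + c) t) :
    Δ T = c / β * (Real.exp (-β * (T - b)) - Real.exp (-β * (T - a))) := by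
  have hβ₀ : β ≠ 0 := hβ.ne'
  have hΔa : Δ a = 0 := by
    simpa [h0] using sub_div_eq_exp_mul_of_hasDerivAt_affine (c := 0) hβ₀ ha
      (hcont.mono (Icc_subset_Icc le_rfl (hab.trans hbT)))
      (fun t ht => by simpa using hout t (Or.inl ht))
  have hΔb := sub_div_eq_exp_mul_of_hasDerivAt_affine hβ₀ hab
    (hcont.mono (Icc_subset_Icc ha hbT)) hin
  have hΔT := sub_div_eq_exp_mul_of_hasDerivAt_affine (c := 0) hβ₀ hbT
    (hcont.mono (Icc_subset_Icc (ha.trans hab) le_rfl))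
    (fun t ht => by simpa using hout t (Or.inr ht))
  have hsplit : exp (-β * (T - a)) = exp (-β * (T - b)) * exp (-β * (b - a)) := by
    rw [← exp_add]; ring_nf
  simp only [zero_div, sub_zero] at hΔT
  rw [hΔa] at hΔb
  rw [hΔT, hsplit]
  linear_combination exp (-β * (T - b)) * hΔb
end
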